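/- In an irreducible deterministic complete finite automaton, any two minimal images have the same cardinality. -/

import Mathlib

/-!
If `I = Q·u` is a minimal image, then for every word `v` the image `Q·vu = (Q·v)·u` lies in
`Q·u`, hence equals `I` by minimality, while it has at most `|Q·v|` elements. So every
minimal image has the least cardinality among all images.
-/

def dcaRun {Q A : Type*} (δ : Q → A → Q) (p : Q) (w : List A) : Q := w.foldl δ p

/-- The image `Q·w` of the whole state set under the word `w`. -/
def dcaImg {Q A : Type*} [Fintype Q] [DecidableEq Q] (δ : Q → A → Q) (w : List A) :
    Finset Q := Finset.univ.image (fun p => dcaRun δ p w)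

/-- A minimal image: an image that is minimal for inclusion among all images. -/
def IsMinImage {Q A : Type*} [Fintype Q] [DecidableEq Q] (δ : Q → A → Q)
    (I : Finset Q) : Prop :=
  (∃ w : List A, I = dcaImg δ w) ∧ ∀ w : List A, dcaImg δ w ⊆ I → dcaImg δ w = I

lemma dcaRun_append {Q A : Type*} (δ : Q → A → Q) (p : Q) (v u : List A) :
    dcaRun δ p (v ++ u) = dcaRun δ (dcaRun δ p v) u :=
  List.foldl_append

section Images

variable {Q A : Type*} [Fintype Q] [DecidableEq Q] (δ : Q → A → Q)

lemma dcaImg_append (v u : List A) :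
    dcaImg δ (v ++ u) = (dcaImg δ v).image (fun q => dcaRun δ q u) := by
  simp only [dcaImg, Finset.image_image, Function.comp_def, dcaRun_append]

lemma dcaImg_append_subset (v u : List A) : dcaImg δ (v ++ u) ⊆ dcaImg δ u := by
  rw [dcaImg_append]
  exact Finset.image_subset_image (Finset.subset_univ _)

lemma card_dcaImg_append_le (v u : List A) :
    (dcaImg δ (v ++ u)).card ≤ (dcaImg δ v).card := by
  rw [dcaImg_append]
  exact Finset.card_image_le

variable {δ}

lemma IsMinImage.card_le_card_dcaImg {I : Finset Q} (hI : IsMinImage δ I) (v : List A) :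
    I.card ≤ (dcaImg δ v).card := by
  obtain ⟨⟨u, rfl⟩, hmin⟩ := hI
  calc (dcaImg δ u).card = (dcaImg δ (v ++ u)).card := by
        rw [hmin (v ++ u) (dcaImg_append_subset δ v u)]
    _ ≤ (dcaImg δ v).card := card_dcaImg_append_le δ v u

end Images

theorem minImages_same_card_general {Q A : Type*} [Fintype Q] [DecidableEq Q]
    (δ : Q → A → Q)
    (I J : Finset Q) (hI : IsMinImage δ I) (hJ : IsMinImage δ J) :
    I.card = J.card := by
  obtain ⟨v, rfl⟩ := hJ.1
  obtain ⟨u, rfl⟩ := hI.1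
  exact le_antisymm (hI.card_le_card_dcaImg v) (hJ.card_le_card_dcaImg u)

/-- In an irreducible automaton any two minimal images have the same cardinality. -/
theorem minImages_same_card {Q A : Type*} [Fintype Q] [DecidableEq Q]
    (δ : Q → A → Q) (hirr : ∀ p q : Q, ∃ w : List A, dcaRun δ p w = q)
    (I J : Finset Q) (hI : IsMinImage δ I) (hJ : IsMinImage δ J) :
    I.card = J.card :=
  minImages_same_card_general δ I J hI hJ
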